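/- arXiv:1712.03416 — 7 statements merged into one kernel-verified Lean document; each statement's English description precedes it below -/
import Mathlib

section
/- Let U = {u^1,...,u^i} and V = {v^1,...,v^j} be finite subsets of the Euclidean unit sphere S^{n-1} in R^n, and suppose there exist positive scalars λ_1,...,λ_i and μ_1,...,μ_j with Σ_k λ_k u^k = 0 and Σ_l μ_l v^l = 0. Then there exist indices k ∈ [i] and l ∈ [j] such that ‖u^k + v^l‖_2 ≥ √2. -/
/-!
A positive combination of the vectors of `U` vanishes, so for any `v ∈ V` the numbers `⟪u, v⟫`,
`u ∈ U`, have a vanishing positive combination and one of them is nonnegative. For unit vectors,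
`‖u + v‖² = 2 + 2 ⟪u, v⟫ ≥ 2`.
-/

open Finset

open scoped RealInnerProductSpace

theorem exists_inner_nonneg_of_sum_smul_eq_zero {E : Type*} [NormedAddCommGroup E]
    [InnerProductSpace ℝ E] {s : Finset E} (hs : s.Nonempty) {w : E → ℝ}
    (hw : ∀ x ∈ s, 0 < w x) (hsum : ∑ x ∈ s, w x • x = 0) (y : E) :
    ∃ x ∈ s, 0 ≤ ⟪x, y⟫ := by
  by_contra! hneg
  have hlt : ∑ x ∈ s, w x * ⟪x, y⟫ < 0 :=
    sum_neg (fun x hx => mul_neg_of_pos_of_neg (hw x hx) (hneg x hx)) hs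
  have hzero : ∑ x ∈ s, w x * ⟪x, y⟫ = 0 := by
    simpa only [sum_inner, real_inner_smul_left, inner_zero_left] using congrArg (⟪·, y⟫) hsum
  exact hlt.ne hzero

theorem sqrt_two_le_norm_add_of_inner_nonneg {E : Type*} [NormedAddCommGroup E]
    [InnerProductSpace ℝ E] {u v : E} (hu : ‖u‖ = 1) (hv : ‖v‖ = 1) (huv : 0 ≤ ⟪u, v⟫) :
    Real.sqrt 2 ≤ ‖u + v‖ := by
  have hsq : ‖u + v‖ ^ 2 = 2 + 2 * ⟪u, v⟫ := by
    rw [norm_add_sq_real, hu, hv]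
    ring
  exact Real.sqrt_le_iff.mpr ⟨norm_nonneg _, by linarith⟩

theorem additive_caratheodory_two_sets_general {n : ℕ}
    (U V : Finset (EuclideanSpace ℝ (Fin n)))
    (hUne : U.Nonempty) (hVne : V.Nonempty)
    (hU : ∀ u ∈ U, ‖u‖ = 1) (hV : ∀ v ∈ V, ‖v‖ = 1)
    (lam : EuclideanSpace ℝ (Fin n) → ℝ)
    (hlam : ∀ u ∈ U, 0 < lam u)
    (hU0 : ∑ u ∈ U, lam u • u = 0) :
    ∃ u ∈ U, ∃ v ∈ V, Real.sqrt 2 ≤ ‖u + v‖ := by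
  obtain ⟨v, hv⟩ := hVne
  obtain ⟨u, hu, huv⟩ := exists_inner_nonneg_of_sum_smul_eq_zero hUne hlam hU0 v
  exact ⟨u, hu, v, hv, sqrt_two_le_norm_add_of_inner_nonneg (hU u hu) (hV v hv) huv⟩

theorem additive_caratheodory_two_sets {n : ℕ}
    (U V : Finset (EuclideanSpace ℝ (Fin n)))
    (hUne : U.Nonempty) (hVne : V.Nonempty)
    (hU : ∀ u ∈ U, ‖u‖ = 1) (hV : ∀ v ∈ V, ‖v‖ = 1)
    (lam mu : EuclideanSpace ℝ (Fin n) → ℝ)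
    (hlam : ∀ u ∈ U, 0 < lam u) (hmu : ∀ v ∈ V, 0 < mu v)
    (hU0 : ∑ u ∈ U, lam u • u = 0) (hV0 : ∑ v ∈ V, mu v • v = 0) :
    ∃ u ∈ U, ∃ v ∈ V, Real.sqrt 2 ≤ ‖u + v‖ :=
  additive_caratheodory_two_sets_general U V hUne hVne hU hV lam hlam hU0
end

section
/- For i ∈ [j] with j ∈ N, let U_i = {u^i_1,...,u^i_{k_i}} ⊂ r_i S^{n-1} with r_i > 0 and 2 ≤ k_i ≤ n+1, and suppose there exist positive scalars λ^i_1,...,λ^i_{k_i} with Σ_{l=1}^{k_i} λ^i_l u^i_l = 0 for each i. Then for every c ∈ R^n, max over choices l_1 ∈ [k_1],...,l_j ∈ [k_j] of ‖u^1_{l_1} + ... + u^j_{l_j} − c‖_2 is at least √(r_1² + ... + r_j²). -/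
/-!
Choose the vectors greedily. Since `0` is a positive combination of `U i`, every vector `v` has
`⟪v, u⟫ ≥ 0` for some `u ∈ U i`; adding that `u` to `v` gives `‖v + u‖² ≥ ‖v‖² + r i ²`.
Starting from `v = -c` and adding one vector of each `U i` in turn yields
`‖∑ sel - c‖² ≥ ∑ r i ²`.
-/

open Finset

section InnerProductSpace

open scoped InnerProductSpace

variable {E : Type*} [NormedAddCommGroup E] [InnerProductSpace ℝ E]

theorem exists_mem_inner_nonneg_of_sum_smul_eq_zero {U : Finset E} (hU : U.Nonempty)
    {lam : E → ℝ} (hlam : ∀ u ∈ U, 0 < lam u) (hzero : ∑ u ∈ U, lam u • u = 0) (v : E) :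
    ∃ u ∈ U, 0 ≤ ⟪v, u⟫_ℝ := by
  by_contra! hneg
  have hsum_neg : ∑ u ∈ U, lam u * ⟪v, u⟫_ℝ < 0 :=
    sum_neg (fun u hu => mul_neg_of_pos_of_neg (hlam u hu) (hneg u hu)) hU
  have hsum_zero : ∑ u ∈ U, lam u * ⟪v, u⟫_ℝ = 0 := by
    simp only [← real_inner_smul_right, ← inner_sum, hzero, inner_zero_right]
  linarith

theorem exists_mem_norm_sq_add_sum_le_norm_add_sum_sq :
    ∀ {j : ℕ} (U : Fin j → Set E), (∀ i v, ∃ u ∈ U i, 0 ≤ ⟪v, u⟫_ℝ) → ∀ c : E,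
      ∃ sel : Fin j → E, (∀ i, sel i ∈ U i) ∧
        ‖c‖ ^ 2 + ∑ i, ‖sel i‖ ^ 2 ≤ ‖c + ∑ i, sel i‖ ^ 2
  | 0, _, _, c => ⟨Fin.elim0, fun i => i.elim0, by simp⟩
  | j + 1, U, hU, c => by
    obtain ⟨sel, hsel, hbound⟩ :=
      exists_mem_norm_sq_add_sum_le_norm_add_sum_sq (fun i => U i.castSucc) (fun i => hU _) c
    obtain ⟨u, hu, hinner⟩ := hU (Fin.last j) (c + ∑ i, sel i)
    refine ⟨Fin.snoc sel u, Fin.lastCases (by simpa using hu) (by simpa using hsel), ?_⟩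
    simp only [Fin.sum_univ_castSucc, Fin.snoc_castSucc, Fin.snoc_last, ← add_assoc,
      norm_add_sq_real (c + ∑ i, sel i) u]
    linarith

end InnerProductSpace

theorem additive_colourful_caratheodory_general {n j : ℕ}
    (U : Fin j → Finset (EuclideanSpace ℝ (Fin n))) (r : Fin j → ℝ)
    (hcard : ∀ i, 2 ≤ (U i).card ∧ (U i).card ≤ n + 1)
    (hnorm : ∀ i, ∀ u ∈ U i, ‖u‖ = r i)
    (lam : Fin j → EuclideanSpace ℝ (Fin n) → ℝ)
    (hlam : ∀ i, ∀ u ∈ U i, 0 < lam i u)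
    (hzero : ∀ i, ∑ u ∈ U i, lam i u • u = 0)
    (c : EuclideanSpace ℝ (Fin n)) :
    ∃ sel : Fin j → EuclideanSpace ℝ (Fin n),
      (∀ i, sel i ∈ U i) ∧
        Real.sqrt (∑ i, (r i) ^ 2) ≤ ‖(∑ i, sel i) - c‖ := by
  have hne (i : Fin j) : (U i).Nonempty := card_pos.mp (by linarith [(hcard i).1])
  obtain ⟨sel, hsel, hbound⟩ := exists_mem_norm_sq_add_sum_le_norm_add_sum_sq (fun i => ↑(U i))
    (fun i => exists_mem_inner_nonneg_of_sum_smul_eq_zero (hne i) (hlam i) (hzero i)) (-c)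
  refine ⟨sel, hsel, Real.sqrt_le_iff.mpr ⟨norm_nonneg _, ?_⟩⟩
  have hr : ∑ i, r i ^ 2 = ∑ i, ‖sel i‖ ^ 2 :=
    sum_congr rfl fun i _ => by rw [hnorm i _ (hsel i)]
  rw [hr, sub_eq_neg_add]
  linarith [sq_nonneg ‖-c‖]

theorem additive_colourful_caratheodory {n j : ℕ}
    (U : Fin j → Finset (EuclideanSpace ℝ (Fin n))) (r : Fin j → ℝ)
    (hr : ∀ i, 0 < r i)
    (hcard : ∀ i, 2 ≤ (U i).card ∧ (U i).card ≤ n + 1)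
    (hnorm : ∀ i, ∀ u ∈ U i, ‖u‖ = r i)
    (lam : Fin j → EuclideanSpace ℝ (Fin n) → ℝ)
    (hlam : ∀ i, ∀ u ∈ U i, 0 < lam i u)
    (hzero : ∀ i, ∑ u ∈ U i, lam i u • u = 0)
    (c : EuclideanSpace ℝ (Fin n)) :
    ∃ sel : Fin j → EuclideanSpace ℝ (Fin n),
      (∀ i, sel i ∈ U i) ∧
        Real.sqrt (∑ i, (r i) ^ 2) ≤ ‖(∑ i, sel i) - c‖ :=
  additive_colourful_caratheodory_general U r hcard hnorm lam hlam hzero c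
end

section
/- Let U_i ⊂ r_i S^{n-1} (i ∈ [j]) be finite sets, each admitting positive coefficients summing the vectors to 0, and suppose that for some c ∈ R^n the maximum over all choices u^i ∈ U_i of ‖u^1 + ... + u^j − c‖_2 equals √(r_1² + ... + r_j²). Then c = 0, j ≤ n, and U_k ⊥ U_l (every vector of U_k is orthogonal to every vector of U_l) for all 1 ≤ k < l ≤ j. -/
/-!
If `U` is positively balanced (a positive combination of its vectors vanishes), then for every `w` some
`u ∈ U` has `⟪u, w⟫ ≥ 0`, hence `‖u + w‖² ≥ ‖u‖² + ‖w‖²`. Choosing one colour at a time in this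
greedy way yields, for every set `s` of colours and every offset `b`, a selection with
`‖∑_{i ∈ s} uⁱ + b‖² ≥ ∑_{i ∈ s} rᵢ² + ‖b‖²`. Taking `b = -c` forces `c = 0`. Taking `s` to be all
colours but `k, l` and `b = u + v` forces `⟪u, v⟫ ≤ 0` for `u ∈ U k`, `v ∈ U l`, and balancedness
of `U l` upgrades this to `⟪u, v⟫ = 0`. One vector of each colour then gives `j` pairwise
orthogonal nonzero vectors, so `j ≤ n`.
-/

open Finset

open scoped RealInnerProductSpace

variable {E : Type*} [NormedAddCommGroup E] [InnerProductSpace ℝ E]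

def PositivelyBalanced (T : Finset E) : Prop :=
  ∃ w : E → ℝ, (∀ u ∈ T, 0 < w u) ∧ ∑ u ∈ T, w u • u = 0

namespace PositivelyBalanced

variable {T : Finset E}

theorem inner_eq_zero_of_forall_inner_nonpos (hT : PositivelyBalanced T) {b : E}
    (hb : ∀ u ∈ T, ⟪u, b⟫ ≤ 0) : ∀ u ∈ T, ⟪u, b⟫ = 0 := by
  obtain ⟨w, hw, hsum⟩ := hT
  have hzero : ∑ u ∈ T, w u * ⟪u, b⟫ = 0 := by
    simp_rw [← real_inner_smul_left, ← sum_inner, hsum, inner_zero_left]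
  have hterms := (sum_eq_zero_iff_of_nonpos fun u hu =>
    mul_nonpos_of_nonneg_of_nonpos (hw u hu).le (hb u hu)).1 hzero
  exact fun u hu => (mul_eq_zero.1 (hterms u hu)).resolve_left (hw u hu).ne'

theorem exists_inner_nonneg (hT : PositivelyBalanced T) (hne : T.Nonempty) (b : E) :
    ∃ u ∈ T, 0 ≤ ⟪u, b⟫ := by
  by_contra! hneg
  obtain ⟨u, hu⟩ := hne
  exact (hneg u hu).ne (hT.inner_eq_zero_of_forall_inner_nonpos (fun v hv => (hneg v hv).le) u hu)

end PositivelyBalanced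

section Colourful

variable {ι : Type*} [DecidableEq ι] {U : ι → Finset E} {r : ι → ℝ}

theorem exists_selection_sq_norm_sum_add_ge (hU : ∀ i, PositivelyBalanced (U i))
    (hne : ∀ i, (U i).Nonempty) (hnorm : ∀ i, ∀ u ∈ U i, ‖u‖ = r i) (s : Finset ι) (b : E) :
    ∃ sel : ι → E, (∀ i ∈ s, sel i ∈ U i) ∧
      ∑ i ∈ s, r i ^ 2 + ‖b‖ ^ 2 ≤ ‖∑ i ∈ s, sel i + b‖ ^ 2 := by
  induction s using Finset.induction_on with
  | empty => exact ⟨0, by simp⟩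
  | insert a s ha ih =>
    obtain ⟨sel, hsel, hle⟩ := ih
    obtain ⟨u, hu, hinner⟩ := (hU a).exists_inner_nonneg (hne a) (∑ i ∈ s, sel i + b)
    refine ⟨Function.update sel a u, ?_, ?_⟩
    · intro i hi
      rcases mem_insert.1 hi with rfl | hi
      · simpa using hu
      · rw [Function.update_of_ne (ne_of_mem_of_not_mem hi ha)]
        exact hsel i hi
    · rw [sum_insert ha, sum_insert ha, Function.update_self, sum_update_of_notMem ha,
        add_assoc u, norm_add_sq_real u, hnorm a u hu]
      linarith

variable [Fintype ι]

theorem eq_zero_of_forall_sq_norm_sum_sub_le (hU : ∀ i, PositivelyBalanced (U i))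
    (hne : ∀ i, (U i).Nonempty) (hnorm : ∀ i, ∀ u ∈ U i, ‖u‖ = r i) {c : E}
    (hmax : ∀ sel : ι → E, (∀ i, sel i ∈ U i) → ‖∑ i, sel i - c‖ ^ 2 ≤ ∑ i, r i ^ 2) :
    c = 0 := by
  obtain ⟨sel, hsel, hle⟩ := exists_selection_sq_norm_sum_add_ge hU hne hnorm univ (-c)
  have := hmax sel fun i => hsel i (mem_univ i)
  rw [norm_neg, ← sub_eq_add_neg] at hle
  have hc : ‖c‖ ^ 2 ≤ 0 := by linarith
  exact norm_eq_zero.1 (pow_eq_zero_iff two_ne_zero |>.1 (le_antisymm hc (sq_nonneg _)))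

theorem inner_eq_zero_of_forall_sq_norm_sum_le (hU : ∀ i, PositivelyBalanced (U i))
    (hne : ∀ i, (U i).Nonempty) (hnorm : ∀ i, ∀ u ∈ U i, ‖u‖ = r i)
    (hmax : ∀ sel : ι → E, (∀ i, sel i ∈ U i) → ‖∑ i, sel i‖ ^ 2 ≤ ∑ i, r i ^ 2)
    {k l : ι} (hkl : k ≠ l) : ∀ u ∈ U k, ∀ v ∈ U l, ⟪u, v⟫ = 0 := by
  have hnonpos : ∀ u ∈ U k, ∀ v ∈ U l, ⟪v, u⟫ ≤ 0 := by
    intro u hu v hv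
    have hk : k ∉ ({k, l} : Finset ι)ᶜ := by simp
    have hl : l ∉ ({k, l} : Finset ι)ᶜ := by simp
    obtain ⟨sel, hsel, hle⟩ :=
      exists_selection_sq_norm_sum_add_ge hU hne hnorm ({k, l} : Finset ι)ᶜ (u + v)
    set sel' := Function.update (Function.update sel k u) l v
    have hsel' : ∀ i, sel' i ∈ U i := by
      intro i
      by_cases hil : i = l
      · subst hil; simpa [sel'] using hv
      by_cases hik : i = k
      · subst hik; simpa [sel', hil] using hu
      · simpa [sel', hil, hik] using hsel i (by simp [hik, hil])
    have hsum : ∑ i, sel' i = ∑ i ∈ ({k, l} : Finset ι)ᶜ, sel i + (u + v) := by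
      rw [← sum_compl_add_sum {k, l}, sum_pair hkl, sum_update_of_notMem hl,
        sum_update_of_notMem hk]
      simp [sel', hkl]
    have hrsum : ∑ i, r i ^ 2 = ∑ i ∈ ({k, l} : Finset ι)ᶜ, r i ^ 2 + (r k ^ 2 + r l ^ 2) := by
      rw [← sum_compl_add_sum {k, l}, sum_pair hkl]
    have := hmax sel' hsel'
    rw [hsum, hrsum] at this
    rw [norm_add_sq_real, hnorm k u hu, hnorm l v hv] at hle
    rw [real_inner_comm]
    linarith
  intro u hu v hv
  rw [real_inner_comm]
  exact (hU l).inner_eq_zero_of_forall_inner_nonpos (hnonpos u hu) v hv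

end Colourful

theorem additive_colourful_caratheodory_equality_case {n j : ℕ}
    (U : Fin j → Finset (EuclideanSpace ℝ (Fin n))) (r : Fin j → ℝ)
    (hr : ∀ i, 0 < r i)
    (hne : ∀ i, (U i).Nonempty)
    (hnorm : ∀ i, ∀ u ∈ U i, ‖u‖ = r i)
    (lam : Fin j → EuclideanSpace ℝ (Fin n) → ℝ)
    (hlam : ∀ i, ∀ u ∈ U i, 0 < lam i u)
    (hzero : ∀ i, ∑ u ∈ U i, lam i u • u = 0)
    (c : EuclideanSpace ℝ (Fin n))
    (hmax : IsGreatest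
      {x : ℝ | ∃ sel : Fin j → EuclideanSpace ℝ (Fin n),
        (∀ i, sel i ∈ U i) ∧ x = ‖(∑ i, sel i) - c‖}
      (Real.sqrt (∑ i, (r i) ^ 2))) :
    c = 0 ∧ j ≤ n ∧
      ∀ k l : Fin j, k < l →
        ∀ u ∈ U k, ∀ v ∈ U l, (inner ℝ u v : ℝ) = 0 := by
  have hU : ∀ i, PositivelyBalanced (U i) := fun i => ⟨lam i, hlam i, hzero i⟩
  have hbound : ∀ sel : Fin j → EuclideanSpace ℝ (Fin n), (∀ i, sel i ∈ U i) → ‖∑ i, sel i - c‖ ^ 2 ≤ ∑ i, r i ^ 2 :=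
    fun sel hsel => (Real.le_sqrt (norm_nonneg _) (sum_nonneg fun i _ => sq_nonneg _)).1
      (hmax.2 ⟨sel, hsel, rfl⟩)
  obtain rfl := eq_zero_of_forall_sq_norm_sum_sub_le hU hne hnorm hbound
  simp only [sub_zero] at hbound
  have horth {k l : Fin j} (hkl : k ≠ l) : ∀ u ∈ U k, ∀ v ∈ U l, ⟪u, v⟫ = 0 :=
    inner_eq_zero_of_forall_sq_norm_sum_le hU hne hnorm hbound hkl
  choose sel hsel using hne
  have hindep : LinearIndependent ℝ sel :=
    linearIndependent_of_ne_zero_of_inner_eq_zero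
      (fun i => norm_ne_zero_iff.1 (by rw [hnorm i _ (hsel i)]; exact (hr i).ne'))
      (fun k l hkl => horth hkl _ (hsel k) _ (hsel l))
  refine ⟨rfl, ?_, fun k l hkl => horth hkl.ne⟩
  simpa using hindep.fintype_card_le_finrank
end

section
/- Let K_1,...,K_j be convex bodies in R^n. Then R(K_1)² + ... + R(K_j)² ≤ R(K_1 + ... + K_j)², where R(K) denotes the Euclidean circumradius of K and + denotes Minkowski addition. -/
/-!
If `c` is a circumcentre of a compact set `K` and `K` lies in a ball of radius `ρ` about `x`, then
`R(K)² + |x - c|² ≤ ρ²`: the two balls meet in a region that fits in a ball of squared radius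
`(1 - t) R(K)² + t ρ² - t (1 - t) |x - c|²` centred at `c + t (x - c)`, and minimality of `R(K)` as
`t → 0` gives the claim. Applying this to `K₁` inside a circumball of `K₁ + ⋯ + Kⱼ`, translated by
an arbitrary point of `K₂ + ⋯ + Kⱼ`, shows that `K₂ + ⋯ + Kⱼ` lies in a ball of squared radius
`R(K₁ + ⋯ + Kⱼ)² - R(K₁)²`, and induction on `j` finishes.
-/

open Metric Finset

/-- The Euclidean circumradius of a set `K`: the smallest `ρ ≥ 0` such that `K` is
contained in some closed ball of radius `ρ`. -/
noncomputable def circR {n : ℕ} (K : Set (EuclideanSpace ℝ (Fin n))) : ℝ :=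
  sInf {ρ : ℝ | 0 ≤ ρ ∧ ∃ x, K ⊆ Metric.closedBall x ρ}

/-- The Minkowski sum of a finite family of subsets of `ℝⁿ`. -/
def msum {n j : ℕ} (K : Fin j → Set (EuclideanSpace ℝ (Fin n))) :
    Set (EuclideanSpace ℝ (Fin n)) :=
  {x | ∃ f : Fin j → EuclideanSpace ℝ (Fin n), (∀ i, f i ∈ K i) ∧ x = ∑ i, f i}

open Filter Topology

theorem dist_sq_lineMap {E : Type*} [NormedAddCommGroup E] [InnerProductSpace ℝ E]
    (y c x : E) (t : ℝ) :
    dist y (AffineMap.lineMap c x t) ^ 2 =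
      (1 - t) * dist y c ^ 2 + t * dist y x ^ 2 - t * (1 - t) * dist c x ^ 2 := by
  have h₁ : y - AffineMap.lineMap c x t = (y - c) - t • (x - c) := by
    rw [AffineMap.lineMap_apply_module']; abel
  have h₂ : y - x = (y - c) - (x - c) := by abel
  rw [dist_eq_norm, dist_eq_norm, dist_eq_norm, dist_comm, dist_eq_norm, h₁, h₂,
    norm_sub_sq_real (y - c), norm_sub_sq_real (y - c), norm_smul, inner_smul_right, mul_pow,
    Real.norm_eq_abs, sq_abs]
  ring

section

variable {n : ℕ}

theorem circR_nonneg (K : Set (EuclideanSpace ℝ (Fin n))) : 0 ≤ circR K :=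
  Real.sInf_nonneg fun _ hρ => hρ.1

theorem sq_circR_le_of_dist_sq_le {K : Set (EuclideanSpace ℝ (Fin n))} (hne : K.Nonempty)
    {p : EuclideanSpace ℝ (Fin n)} {A : ℝ} (h : ∀ y ∈ K, dist y p ^ 2 ≤ A) :
    circR K ^ 2 ≤ A := by
  obtain ⟨y₀, hy₀⟩ := hne
  have hA : 0 ≤ A := (sq_nonneg _).trans (h y₀ hy₀)
  have hball : K ⊆ closedBall p √A := fun y hy =>
    (Real.le_sqrt dist_nonneg hA).2 (h y hy)
  have hle : circR K ≤ √A := csInf_le ⟨0, fun _ hρ => hρ.1⟩ ⟨Real.sqrt_nonneg A, p, hball⟩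
  calc circR K ^ 2 ≤ √A ^ 2 := pow_le_pow_left₀ (circR_nonneg K) hle 2
    _ = A := Real.sq_sqrt hA

theorem exists_subset_closedBall_circR {K : Set (EuclideanSpace ℝ (Fin n))} (hK : IsCompact K)
    (hne : K.Nonempty) : ∃ c, K ⊆ closedBall c (circR K) := by
  set f : EuclideanSpace ℝ (Fin n) → ℝ := fun x => sSup ((dist x ·) '' K)
  have hf : Continuous f := hK.continuous_sSup continuous_dist
  have hle : ∀ x, ∀ y ∈ K, dist x y ≤ f x := fun x y hy =>
    le_csSup (hK.bddAbove_image (continuous_const.dist continuous_id).continuousOn) ⟨y, hy, rfl⟩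
  obtain ⟨y₀, hy₀⟩ := hne
  obtain ⟨c, hc⟩ := hf.exists_forall_le <|
    tendsto_atTop_mono (fun x => hle x y₀ hy₀) (tendsto_dist_right_cocompact_atTop y₀)
  have hleast : IsLeast {ρ : ℝ | 0 ≤ ρ ∧ ∃ x, K ⊆ closedBall x ρ} (f c) := by
    refine ⟨⟨dist_nonneg.trans (hle c y₀ hy₀), c, fun y hy => mem_closedBall'.2 (hle c y hy)⟩, ?_⟩
    rintro ρ ⟨-, x, hx⟩
    refine (hc x).trans (csSup_le ⟨_, y₀, hy₀, rfl⟩ ?_)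
    rintro _ ⟨y, hy, rfl⟩
    exact mem_closedBall'.1 (hx hy)
  refine ⟨c, fun y hy => ?_⟩
  rw [circR, hleast.csInf_eq]
  exact mem_closedBall'.2 (hle c y hy)

theorem sq_circR_add_sq_dist_le {K : Set (EuclideanSpace ℝ (Fin n))} (hne : K.Nonempty)
    {c x : EuclideanSpace ℝ (Fin n)} (hc : K ⊆ closedBall c (circR K)) {A : ℝ}
    (hx : ∀ y ∈ K, dist y x ^ 2 ≤ A) : circR K ^ 2 + dist c x ^ 2 ≤ A := by
  set r := circR K
  set d := dist c x
  have hshift : ∀ t ∈ Set.Ioc (0 : ℝ) 1, r ^ 2 + (1 - t) * d ^ 2 ≤ A := by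
    rintro t ⟨ht₀, ht₁⟩
    have hr : r ^ 2 ≤ (1 - t) * r ^ 2 + t * A - t * (1 - t) * d ^ 2 := by
      refine sq_circR_le_of_dist_sq_le hne (p := AffineMap.lineMap c x t) fun y hy => ?_
      have hyc : dist y c ^ 2 ≤ r ^ 2 := pow_le_pow_left₀ dist_nonneg (hc hy) 2
      rw [dist_sq_lineMap]
      nlinarith [hx y hy]
    nlinarith
  have hlim : Tendsto (fun t : ℝ => r ^ 2 + (1 - t) * d ^ 2) (𝓝[>] 0) (𝓝 (r ^ 2 + d ^ 2)) := by
    refine Tendsto.mono_left ?_ nhdsWithin_le_nhds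
    convert (by fun_prop : Continuous fun t : ℝ => r ^ 2 + (1 - t) * d ^ 2).tendsto 0 using 2
    ring
  exact le_of_tendsto hlim (mem_of_superset (Ioc_mem_nhdsGT zero_lt_one) hshift)

theorem msum_eq_image {j : ℕ} (K : Fin j → Set (EuclideanSpace ℝ (Fin n))) :
    msum K = (fun f => ∑ i, f i) '' Set.univ.pi K := by
  ext x
  simp [msum, eq_comm]

theorem add_mem_msum_succ {j : ℕ} {K : Fin (j + 1) → Set (EuclideanSpace ℝ (Fin n))}
    {a s : EuclideanSpace ℝ (Fin n)} (ha : a ∈ K 0) (hs : s ∈ msum fun i => K i.succ) :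
    a + s ∈ msum K := by
  obtain ⟨f, hf, rfl⟩ := hs
  exact ⟨Fin.cons a f, Fin.cases ha hf, (Fin.sum_cons a f).symm⟩

theorem isCompact_msum {j : ℕ} {K : Fin j → Set (EuclideanSpace ℝ (Fin n))}
    (hcpt : ∀ i, IsCompact (K i)) : IsCompact (msum K) := by
  rw [msum_eq_image]
  exact (isCompact_univ_pi hcpt).image (continuous_finsetSum _ fun i _ => continuous_apply i)

theorem msum_nonempty {j : ℕ} {K : Fin j → Set (EuclideanSpace ℝ (Fin n))}
    (hne : ∀ i, (K i).Nonempty) : (msum K).Nonempty := by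
  rw [msum_eq_image]
  exact (Set.univ_pi_nonempty_iff.2 hne).image _

theorem sum_sq_circR_le_of_msum_dist_sq_le {j : ℕ} {K : Fin j → Set (EuclideanSpace ℝ (Fin n))}
    (hcpt : ∀ i, IsCompact (K i)) (hne : ∀ i, (K i).Nonempty) {x : EuclideanSpace ℝ (Fin n)}
    {A : ℝ} (h : ∀ y ∈ msum K, dist y x ^ 2 ≤ A) : ∑ i, circR (K i) ^ 2 ≤ A := by
  induction j generalizing x A with
  | zero =>
    simpa using (sq_nonneg _).trans (h 0 ⟨finZeroElim, finZeroElim, by simp⟩)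
  | succ j ih =>
    obtain ⟨c, hc⟩ := exists_subset_closedBall_circR (hcpt 0) (hne 0)
    have htail : ∀ s ∈ msum (fun i => K i.succ), dist s (x - c) ^ 2 ≤ A - circR (K 0) ^ 2 := by
      intro s hs
      have hK₀ := sq_circR_add_sq_dist_le (hne 0) hc (x := x - s) fun a ha => by
        simpa [← dist_add_right a (x - s) s] using h _ (add_mem_msum_succ ha hs)
      have hdist : dist c (x - s) = dist s (x - c) := by
        rw [dist_eq_norm, dist_eq_norm]
        congr 1
        abel
      rw [hdist] at hK₀
      linarith
    rw [Fin.sum_univ_succ]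
    linarith [ih (fun i => hcpt i.succ) (fun i => hne i.succ) htail]

end

theorem sq_circumradius_superadditive_general {n j : ℕ}
    (K : Fin j → Set (EuclideanSpace ℝ (Fin n)))
    (hcpt : ∀ i, IsCompact (K i))
    (hne : ∀ i, (K i).Nonempty) :
    ∑ i, circR (K i) ^ 2 ≤ circR (msum K) ^ 2 := by
  obtain ⟨c, hc⟩ := exists_subset_closedBall_circR (isCompact_msum hcpt) (msum_nonempty hne)
  exact sum_sq_circR_le_of_msum_dist_sq_le hcpt hne fun y hy => pow_le_pow_left₀ dist_nonneg (hc hy) 2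

theorem sq_circumradius_superadditive {n j : ℕ}
    (K : Fin j → Set (EuclideanSpace ℝ (Fin n)))
    (hconv : ∀ i, Convex ℝ (K i)) (hcpt : ∀ i, IsCompact (K i))
    (hne : ∀ i, (K i).Nonempty) :
    ∑ i, circR (K i) ^ 2 ≤ circR (msum K) ^ 2 :=
  sq_circumradius_superadditive_general K hcpt hne
end

section
/- Let K_1,...,K_j be convex bodies in R^n. Then R(K_1) + ... + R(K_j) ≤ √j · R(K_1 + ... + K_j), where R denotes the Euclidean circumradius and + is Minkowski addition. -/
open Metric Finset

/-- Key lemma: a compact nonempty set has a circumcenter `c`, and for every `z` there is a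
point `p ∈ K` with `‖p - z‖² ≥ R² + ‖z - c‖²`. -/
lemma circ_key {n : ℕ} (K : Set (EuclideanSpace ℝ (Fin n))) (hcpt : IsCompact K)
    (hne : K.Nonempty) :
    ∃ c, K ⊆ Metric.closedBall c (circR K) ∧ 0 ≤ circR K ∧
      ∀ z, ∃ p ∈ K, circR K ^ 2 + dist z c ^ 2 ≤ dist p z ^ 2 := by
  classical
  obtain ⟨p0, hp0⟩ := hne
  have hne : K.Nonempty := ⟨p0, hp0⟩
  have hbdd : ∀ z : EuclideanSpace ℝ (Fin n), BddAbove ((fun p => dist p z) '' K) := fun z =>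
    (hcpt.image (continuous_id.dist continuous_const)).bddAbove
  set F : EuclideanSpace ℝ (Fin n) → ℝ := fun z => sSup ((fun p => dist p z) '' K) with hFdef
  have hFmem : ∀ z, ∀ p ∈ K, dist p z ≤ F z := fun z p hp =>
    le_csSup (hbdd z) ⟨p, hp, rfl⟩
  have hFle : ∀ z ρ, (∀ p ∈ K, dist p z ≤ ρ) → F z ≤ ρ := fun z ρ h =>
    csSup_le (hne.image _) (by rintro r ⟨p, hp, rfl⟩; exact h p hp)
  have hFnonneg : ∀ z, 0 ≤ F z := fun z => dist_nonneg.trans (hFmem z p0 hp0)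
  -- F is attained
  have hFatt : ∀ z, ∃ p ∈ K, F z = dist p z := by
    intro z
    obtain ⟨p, hp, hmax⟩ := hcpt.exists_isMaxOn hne
      ((continuous_id.dist continuous_const).continuousOn (s := K))
    exact ⟨p, hp, le_antisymm (hFle z _ fun q hq => hmax hq) (hFmem z p hp)⟩
  -- F is Lipschitz hence continuous
  have hlip : ∀ z z', F z ≤ F z' + dist z z' := by
    intro z z'
    refine hFle z _ fun p hp => ?_
    calc dist p z ≤ dist p z' + dist z' z := dist_triangle _ _ _
      _ ≤ F z' + dist z z' := by rw [dist_comm z' z]; exact add_le_add (hFmem z' p hp) le_rfl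
  have hFcont : Continuous F := by
    refine LipschitzWith.continuous (K := 1) (LipschitzWith.of_dist_le_mul fun z z' => ?_)
    simp only [NNReal.coe_one, one_mul, Real.dist_eq, abs_le]
    constructor
    · have := hlip z' z; rw [dist_comm z' z] at this; linarith
    · linarith [hlip z z']
  -- circumcenter
  obtain ⟨c, hcB, hcmin⟩ := (isCompact_closedBall p0 (2 * F p0 + 1)).exists_isMinOn
    ⟨p0, by simp [mem_closedBall]; linarith [hFnonneg p0]⟩ hFcont.continuousOn
  have hglobal : ∀ z, F c ≤ F z := by
    intro z
    by_cases hz : z ∈ closedBall p0 (2 * F p0 + 1)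
    · exact hcmin hz
    · have h1 : 2 * F p0 + 1 < dist z p0 := by
        simpa [mem_closedBall, not_le] using hz
      have h2 : dist p0 z ≤ F z := hFmem z p0 hp0
      have h3 : F c ≤ F p0 := hcmin (by simp [mem_closedBall]; linarith [hFnonneg p0])
      rw [dist_comm] at h1
      linarith [hFnonneg p0]
  -- circR K = F c
  have hsubc : K ⊆ closedBall c (F c) := fun p hp => by
    simpa [mem_closedBall] using hFmem c p hp
  have hRc : circR K = F c := by
    apply le_antisymm
    · exact csInf_le ⟨0, fun ρ hρ => hρ.1⟩ ⟨hFnonneg c, c, hsubc⟩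
    · refine le_csInf ⟨F c, hFnonneg c, c, hsubc⟩ ?_
      rintro ρ ⟨hρ0, x, hx⟩
      exact (hglobal x).trans (hFle x ρ fun p hp => by simpa [mem_closedBall] using hx hp)
  refine ⟨c, by rwa [hRc], by rw [hRc]; exact hFnonneg c, ?_⟩
  intro z
  rw [hRc]
  -- key inequality: F c ^ 2 + dist z c ^ 2 ≤ F z ^ 2, then use attainment at z
  obtain ⟨p, hp, hpz⟩ := hFatt z
  refine ⟨p, hp, ?_⟩
  rw [← hpz]
  set d : ℝ := dist z c with hd
  have hdnn : 0 ≤ d := dist_nonneg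
  -- for every t ∈ (0,1], F c ^ 2 ≤ F z ^ 2 - (1 - t) * d ^ 2
  have hstep : ∀ t : ℝ, 0 < t → t ≤ 1 → F c ^ 2 + (1 - t) * d ^ 2 ≤ F z ^ 2 := by
    intro t ht0 ht1
    set w : EuclideanSpace ℝ (Fin n) := c + t • (z - c) with hw
    set M : ℝ := (1 - t) * F c ^ 2 + t * F z ^ 2 - t * (1 - t) * d ^ 2 with hM
    have hpoint : ∀ q ∈ K, dist q w ^ 2 ≤ M := by
      intro q hq
      have hqw : q - w = (1 - t) • (q - c) + t • (q - z) := by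
        rw [hw]; module
      have hid : ‖(1 - t) • (q - c) + t • (q - z)‖ ^ 2
          = (1 - t) * ‖q - c‖ ^ 2 + t * ‖q - z‖ ^ 2 - t * (1 - t) * ‖(q - c) - (q - z)‖ ^ 2 := by
        simp only [← real_inner_self_eq_norm_sq, inner_add_add_self, inner_sub_sub_self,
          real_inner_smul_left, real_inner_smul_right]
        ring
      have hzc : (q - c) - (q - z) = z - c := by abel
      have h1 : dist q c ≤ F c := hFmem c q hq
      have h2 : dist q z ≤ F z := hFmem z q hq
      rw [dist_eq_norm] at h1 h2 ⊢
      rw [hqw, hid, hzc]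
      have hdz : ‖z - c‖ = d := by rw [hd, dist_eq_norm]
      rw [hdz]
      have g1 : ‖q - c‖ ^ 2 ≤ F c ^ 2 := by nlinarith [norm_nonneg (q - c)]
      have g2 : ‖q - z‖ ^ 2 ≤ F z ^ 2 := by nlinarith [norm_nonneg (q - z)]
      nlinarith
    have hM0 : 0 ≤ M := (sq_nonneg (dist p0 w)).trans (hpoint p0 hp0)
    have hFw : F w ≤ Real.sqrt M := by
      refine hFle w _ fun q hq => ?_
      rw [Real.le_sqrt dist_nonneg hM0]
      exact hpoint q hq
    have hFw2 : F w ^ 2 ≤ M := by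
      calc F w ^ 2 ≤ Real.sqrt M ^ 2 := by
            apply pow_le_pow_left₀ (hFnonneg w) hFw
        _ = M := Real.sq_sqrt hM0
    have hcw : F c ≤ F w := hglobal w
    have : F c ^ 2 ≤ M := by nlinarith [hFnonneg c]
    rw [hM] at this
    nlinarith
  -- pass to the limit t → 0
  by_contra hcon
  push_neg at hcon
  set ε : ℝ := F c ^ 2 + d ^ 2 - F z ^ 2 with hε
  have hε0 : 0 < ε := by linarith
  set t : ℝ := min 1 (ε / (d ^ 2 + 1)) with ht
  have ht0 : 0 < t := lt_min one_pos (by positivity)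
  have ht1 : t ≤ 1 := min_le_left _ _
  have htd : t * d ^ 2 < ε := by
    have : t ≤ ε / (d ^ 2 + 1) := min_le_right _ _
    have h1 : t * d ^ 2 ≤ (ε / (d ^ 2 + 1)) * d ^ 2 := by nlinarith [sq_nonneg d]
    have h2 : (ε / (d ^ 2 + 1)) * d ^ 2 < ε := by
      rw [div_mul_eq_mul_div, div_lt_iff₀ (by positivity)]
      nlinarith [sq_nonneg d]
    linarith
  have := hstep t ht0 ht1
  nlinarith

theorem circumradius_sum_sqrt_bound {n j : ℕ}
    (K : Fin j → Set (EuclideanSpace ℝ (Fin n)))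
    (hconv : ∀ i, Convex ℝ (K i)) (hcpt : ∀ i, IsCompact (K i))
    (hne : ∀ i, (K i).Nonempty) :
    ∑ i, circR (K i) ≤ Real.sqrt j * circR (msum K) := by
  classical
  choose c hc1 hc2 hc3 using fun i => circ_key (K i) (hcpt i) (hne i)
  -- recursive construction of far points in partial Minkowski sums
  have main : ∀ s : Finset (Fin j), ∀ z : EuclideanSpace ℝ (Fin n),
      ∃ f : Fin j → EuclideanSpace ℝ (Fin n), (∀ i ∈ s, f i ∈ K i) ∧
        (∑ i ∈ s, circR (K i) ^ 2) + dist z (∑ i ∈ s, c i) ^ 2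
          ≤ dist (∑ i ∈ s, f i) z ^ 2 := by
    intro s
    induction s using Finset.induction_on with
    | empty =>
      intro z
      refine ⟨fun _ => 0, by simp, ?_⟩
      simp [dist_comm]
    | @insert i₀ s hi₀ ih =>
      intro z
      obtain ⟨g, hg1, hg2⟩ := ih (z - c i₀)
      obtain ⟨p, hp, hp2⟩ := hc3 i₀ (z - ∑ i ∈ s, g i)
      refine ⟨Function.update g i₀ p, ?_, ?_⟩
      · intro i hi
        rcases Finset.mem_insert.mp hi with rfl | hi'
        · simpa using hp
        · rw [Function.update_of_ne (by rintro rfl; exact hi₀ hi')]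
          exact hg1 i hi'
      · rw [Finset.sum_insert hi₀, Finset.sum_insert hi₀, Finset.sum_insert hi₀]
        have hupd : ∑ i ∈ s, Function.update g i₀ p i = ∑ i ∈ s, g i := by
          refine Finset.sum_congr rfl fun i hi => ?_
          rw [Function.update_of_ne (by rintro rfl; exact hi₀ hi)]
        rw [Function.update_self, hupd]
        have e1 : dist p (z - ∑ i ∈ s, g i) = dist (p + ∑ i ∈ s, g i) z := by
          rw [dist_eq_norm, dist_eq_norm]; congr 1; abel
        have e2 : dist (z - ∑ i ∈ s, g i) (c i₀) = dist (∑ i ∈ s, g i) (z - c i₀) := by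
          rw [dist_eq_norm, dist_eq_norm, ← norm_neg (z - ∑ i ∈ s, g i - c i₀)]
          congr 1; abel
        rw [e1, e2] at hp2
        have e4 : dist (z - c i₀) (∑ i ∈ s, c i) = dist z (c i₀ + ∑ i ∈ s, c i) := by
          rw [dist_eq_norm, dist_eq_norm]; congr 1; abel
        rw [e4] at hg2
        linarith
  -- msum K is contained in a ball, so the defining set for circR (msum K) is nonempty
  have hRnn : ∀ i, (0:ℝ) ≤ circR (K i) := hc2
  have hsub : msum K ⊆ closedBall (∑ i, c i) (∑ i, circR (K i)) := by
    rintro x ⟨f, hf, rfl⟩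
    rw [mem_closedBall]
    calc dist (∑ i, f i) (∑ i, c i) ≤ ∑ i, dist (f i) (c i) := dist_sum_sum_le _ _ _
      _ ≤ ∑ i, circR (K i) := Finset.sum_le_sum fun i _ => by
          simpa [mem_closedBall] using hc1 i (hf i)
  -- lower bound on circR (msum K)
  have hlow : Real.sqrt (∑ i, circR (K i) ^ 2) ≤ circR (msum K) := by
    refine le_csInf ⟨∑ i, circR (K i), Finset.sum_nonneg fun i _ => hRnn i, ∑ i, c i, hsub⟩ ?_
    rintro ρ ⟨hρ0, x, hx⟩
    obtain ⟨f, hf1, hf2⟩ := main Finset.univ x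
    have hqmem : (∑ i, f i) ∈ msum K := ⟨f, fun i => hf1 i (Finset.mem_univ i), rfl⟩
    have hdist : dist (∑ i, f i) x ≤ ρ := by simpa [mem_closedBall] using hx hqmem
    have hsq : ∑ i, circR (K i) ^ 2 ≤ ρ ^ 2 := by
      nlinarith [sq_nonneg (dist x (∑ i, c i)), dist_nonneg (x := ∑ i, f i) (y := x)]
    calc Real.sqrt (∑ i, circR (K i) ^ 2) ≤ Real.sqrt (ρ ^ 2) := Real.sqrt_le_sqrt hsq
      _ = ρ := Real.sqrt_sq hρ0
  -- Cauchy–Schwarz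
  have hcs : (∑ i, circR (K i)) ^ 2 ≤ (j : ℝ) * ∑ i, circR (K i) ^ 2 := by
    have := sq_sum_le_card_mul_sum_sq (s := (Finset.univ : Finset (Fin j)))
      (f := fun i => circR (K i))
    simpa using this
  have hsum_nn : (0:ℝ) ≤ ∑ i, circR (K i) := Finset.sum_nonneg fun i _ => hRnn i
  calc ∑ i, circR (K i) = Real.sqrt ((∑ i, circR (K i)) ^ 2) := (Real.sqrt_sq hsum_nn).symm
    _ ≤ Real.sqrt ((j : ℝ) * ∑ i, circR (K i) ^ 2) := Real.sqrt_le_sqrt hcs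
    _ = Real.sqrt j * Real.sqrt (∑ i, circR (K i) ^ 2) := Real.sqrt_mul (by positivity) _
    _ ≤ Real.sqrt j * circR (msum K) :=
        mul_le_mul_of_nonneg_left hlow (Real.sqrt_nonneg _)
end

section
/- Let K, C be convex bodies in R^n with K ⊂ C and R(K, C) = 1. Then there exist points p^1,...,p^j ∈ K ∩ ∂C with 2 ≤ j ≤ n+1, outer normal vectors u^1,...,u^j to C at p^1,...,p^j respectively, and positive scalars λ_1,...,λ_j with Σ_{i=1}^j λ_i u^i = 0. -/
open Metric Finset Pointwise

/-- The circumradius of `K` with respect to `C`: the smallest `ρ ≥ 0` such that `K` is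
contained in a translate of `ρ • C`. -/
noncomputable def circC {n : ℕ} (K C : Set (EuclideanSpace ℝ (Fin n))) : ℝ :=
  sInf {ρ : ℝ | 0 ≤ ρ ∧ ∃ x : EuclideanSpace ℝ (Fin n), K ⊆ x +ᵥ ρ • C}

/-
Let `N` be the compact set of unit outer normals of `C` at points of `K`. If `0 ∉ conv N`, some
`v` satisfies `⟪v, u⟫ > 0` for all `u ∈ N`. On the compact set `K × S`, `S` the unit sphere, the
function `h_C(u) - ⟪x, u⟫` (with `h_C` the support function of `C`) is nonnegative and vanishes
only where `u ∈ N`, so for small `t > 0` also `h_C(u) - ⟪x - t v, u⟫ > 0`: the translate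
`K - t v` lies in the interior of `C`, hence in `ρ C` for some `ρ < 1`, contradicting
`R(K, C) = 1`. So `0 ∈ conv N`, and Carathéodory writes `0` as a positive combination of at most
`n + 1` points of `N`, at least two since `0` is not a unit vector. The contact points lie on `∂C`
because an outer normal at an interior point would vanish.
-/

open scoped RealInnerProductSpace Topology

theorem exists_fin_pos_sum_smul_eq_of_mem_convexHull {𝕜 E : Type*} [Field 𝕜] [LinearOrder 𝕜]
    [IsStrictOrderedRing 𝕜] [AddCommGroup E] [Module 𝕜 E] [FiniteDimensional 𝕜 E] {s : Set E}
    {x : E} (hx : x ∈ convexHull 𝕜 s) :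
    ∃ j ≤ Module.finrank 𝕜 E + 1, ∃ (z : Fin j → E) (w : Fin j → 𝕜),
      (∀ i, z i ∈ s) ∧ (∀ i, 0 < w i) ∧ ∑ i, w i = 1 ∧ ∑ i, w i • z i = x := by
  obtain ⟨ι, _, z, w, hzs, hz, hw, hw1, hwz⟩ := eq_pos_convex_span_of_mem_convexHull hx
  have hcard : Fintype.card ι ≤ Module.finrank 𝕜 E + 1 :=
    hz.card_le_finrank_succ.trans (Nat.add_le_add_right (Submodule.finrank_le _) 1)
  set e := (Fintype.equivFin ι).symm
  refine ⟨Fintype.card ι, hcard, z ∘ e, w ∘ e, fun i => hzs ⟨_, rfl⟩, fun i => hw _, ?_, ?_⟩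
  · rw [← hw1]; exact e.sum_comp w
  · rw [← hwz]; exact e.sum_comp fun i => w i • z i

theorem two_le_of_sum_smul_eq_notMem {R M : Type*} [Semiring R] [Nontrivial R] [AddCommMonoid M]
    [Module R M] {j : ℕ} {z : Fin j → M} {w : Fin j → R} {s : Set M} {x : M} (hz : ∀ i, z i ∈ s)
    (hw : ∑ i, w i = 1) (hwz : ∑ i, w i • z i = x) (hx : x ∉ s) : 2 ≤ j := by
  match j, z, w with
  | 0, _, _ => simp at hw
  | 1, z, w =>
    simp only [Fin.sum_univ_one] at hw hwz
    exact absurd (hwz ▸ hw ▸ (one_smul R (z 0)).symm ▸ hz 0) hx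
  | _ + 2, _, _ => omega

theorem isCompact_convexHull {E : Type*} [NormedAddCommGroup E] [NormedSpace ℝ E]
    [FiniteDimensional ℝ E] {s : Set E} (hs : IsCompact s) : IsCompact (convexHull ℝ s) := by
  set P : ℕ → Set E := fun j => (fun p : (Fin j → ℝ) × (Fin j → E) => ∑ i, p.1 i • p.2 i) ''
    (stdSimplex ℝ (Fin j) ×ˢ Set.univ.pi fun _ => s)
  have hP : convexHull ℝ s = ⋃ j ∈ Set.Iic (Module.finrank ℝ E + 1), P j := by
    refine subset_antisymm (fun x hx => ?_) (Set.iUnion₂_subset fun j _ => ?_)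
    · obtain ⟨j, hj, z, w, hz, hw, hw1, hwz⟩ := exists_fin_pos_sum_smul_eq_of_mem_convexHull hx
      exact Set.mem_biUnion hj ⟨(w, z), ⟨⟨fun i => (hw i).le, hw1⟩, fun i _ => hz i⟩, hwz⟩
    · rintro _ ⟨⟨w, z⟩, ⟨⟨hw, hw1⟩, hz⟩, rfl⟩
      exact (convex_convexHull ℝ s).sum_mem (fun i _ => hw i) hw1
        fun i _ => subset_convexHull ℝ s (hz i trivial)
  rw [hP]
  refine (Set.finite_Iic _).isCompact_biUnion fun j _ => ?_
  exact ((isCompact_stdSimplex ℝ (Fin j)).prod (isCompact_univ_pi fun _ => hs)).image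
    (continuous_finsetSum _ fun i _ =>
      ((continuous_apply i).comp continuous_fst).smul ((continuous_apply i).comp continuous_snd))

theorem IsCompact.exists_pos_forall_add_mul_pos {X : Type*} [TopologicalSpace X] {S : Set X}
    (hS : IsCompact S) {f g : X → ℝ} (hf : Continuous f) (hg : Continuous g)
    (hf₀ : ∀ x ∈ S, 0 ≤ f x) (hfg : ∀ x ∈ S, f x = 0 → 0 < g x) :
    ∃ t > 0, ∀ x ∈ S, 0 < f x + t * g x := by
  obtain ⟨δ, hδ, hfδ⟩ := (hS.inter_right (isClosed_le hg continuous_const)).exists_forall_le'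
    hf.continuousOn fun x hx => (hf₀ x hx.1).lt_of_ne fun h => (hfg x hx.1 h.symm).not_ge hx.2
  obtain ⟨M, hM⟩ := hS.exists_bound_of_continuousOn hg.continuousOn
  set t := δ / (|M| + 1)
  have htM : t * |M| < δ := by
    have : t * (|M| + 1) = δ := div_mul_cancel₀ _ (by positivity)
    nlinarith [show 0 < t by positivity]
  refine ⟨t, by positivity, fun x hx => ?_⟩
  rcases le_or_gt (g x) 0 with hgx | hgx
  · have hM' : -|M| ≤ g x := (abs_le.1 ((hM x hx).trans (le_abs_self M))).1
    nlinarith [hfδ x ⟨hx, hgx⟩, show 0 < t by positivity]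
  · nlinarith [hf₀ x hx, show 0 < t by positivity]

theorem IsCompact.exists_subset_smul_of_subset_interior {E : Type*} [AddCommGroup E]
    [TopologicalSpace E] [Module ℝ E] [ContinuousSMul ℝ E] {K C : Set E} (hK : IsCompact K)
    (hKC : K ⊆ interior C) : ∃ ρ : ℝ, 0 < ρ ∧ ρ < 1 ∧ K ⊆ ρ • C := by
  have hnear : ∀ᶠ s : ℝ in 𝓝 1, ∀ k ∈ K, s • k ∈ interior C :=
    hK.eventually_forall_of_forall_eventually fun k hk =>
      (continuous_smul.tendsto ((1 : ℝ), k)).eventually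
        (isOpen_interior.mem_nhds (by simpa using hKC hk))
  obtain ⟨s, hs, hs1⟩ := ((hnear.filter_mono nhdsWithin_le_nhds).and
    (self_mem_nhdsWithin : Set.Ioi (1 : ℝ) ∈ 𝓝[>] 1)).exists
  refine ⟨s⁻¹, by positivity, inv_lt_one_of_one_lt₀ hs1, fun k hk => ?_⟩
  refine ⟨s • k, interior_subset (hs k hk), ?_⟩
  simp [smul_smul, inv_mul_cancel₀ (by positivity : s ≠ 0)]

section InnerProductSpace

variable {E : Type*} [NormedAddCommGroup E] [InnerProductSpace ℝ E]

noncomputable def supportFunction (C : Set E) (u : E) : ℝ := sSup ((⟪·, u⟫) '' C)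

theorem inner_le_supportFunction {C : Set E} (hC : IsCompact C) {y : E} (hy : y ∈ C) (u : E) :
    ⟪y, u⟫ ≤ supportFunction C u :=
  le_csSup (hC.bddAbove_image (continuous_id.inner continuous_const).continuousOn)
    ⟨y, hy, rfl⟩

theorem supportFunction_le {C : Set E} (hC : C.Nonempty) {u : E} {a : ℝ}
    (h : ∀ y ∈ C, ⟪y, u⟫ ≤ a) : supportFunction C u ≤ a :=
  csSup_le (hC.image _) (Set.forall_mem_image.2 h)

theorem continuous_supportFunction {C : Set E} (hC : IsCompact C) :
    Continuous (supportFunction C) :=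
  hC.continuous_sSup (f := fun u y => ⟪y, u⟫) (continuous_snd.inner continuous_fst)

theorem mem_frontier_of_forall_inner_le {C : Set E} {p u : E} (hp : p ∈ C) (hu : u ≠ 0)
    (h : ∀ y ∈ C, ⟪y, u⟫ ≤ ⟪p, u⟫) : p ∈ frontier C := by
  refine ⟨subset_closure hp, fun hint => hu ?_⟩
  have hmax : IsLocalMax (fun y => ⟪u, y⟫) p :=
    Filter.mem_of_superset (mem_interior_iff_mem_nhds.1 hint) fun y hy => by
      change ⟪u, y⟫ ≤ ⟪u, p⟫
      simpa only [real_inner_comm u] using h y hy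
  rw [← norm_eq_zero, ← innerSL_apply_norm ℝ u,
    hmax.hasFDerivAt_eq_zero (innerSL ℝ u).hasFDerivAt, norm_zero]

theorem exists_norm_eq_one_forall_inner_le_of_notMem_interior [CompleteSpace E] {C : Set E}
    (hconv : Convex ℝ C) (hint : (interior C).Nonempty) {y : E} (hy : y ∉ interior C) :
    ∃ u : E, ‖u‖ = 1 ∧ ∀ c ∈ C, ⟪c, u⟫ ≤ ⟪y, u⟫ := by
  obtain ⟨f, hf⟩ := geometric_hahn_banach_open_point hconv.interior isOpen_interior hy
  set w := (InnerProductSpace.toDual ℝ E).symm f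
  have hw : ∀ x, ⟪x, w⟫ = f x := fun x => by
    rw [real_inner_comm]; exact InnerProductSpace.toDual_symm_apply
  have hfC : C ⊆ {c | f c ≤ f y} := by
    refine subset_closure.trans ?_
    rw [← hconv.closure_interior_eq_closure_of_nonempty_interior hint]
    exact closure_minimal (fun c hc => (hf c hc).le) (isClosed_le f.continuous continuous_const)
  obtain ⟨a, ha⟩ := hint
  have hw0 : w ≠ 0 := fun h0 =>
    (hf a ha).ne (by rw [← hw, ← hw, h0, inner_zero_right, inner_zero_right])
  refine ⟨‖w‖⁻¹ • w, by simp [norm_smul, hw0], fun c hc => ?_⟩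
  simp only [real_inner_smul_right, hw]
  exact mul_le_mul_of_nonneg_left (hfC hc) (by positivity)

theorem exists_forall_inner_pos_of_zero_notMem_convexHull [FiniteDimensional ℝ E] {s : Set E}
    (hs : IsCompact s) (h0 : 0 ∉ convexHull ℝ s) : ∃ v : E, ∀ u ∈ s, 0 < ⟪v, u⟫ := by
  obtain ⟨f, a, hfa, hf⟩ :=
    geometric_hahn_banach_point_closed (convex_convexHull ℝ s)
      (isCompact_convexHull hs).isClosed h0
  refine ⟨(InnerProductSpace.toDual ℝ E).symm f, fun u hu => ?_⟩
  rw [InnerProductSpace.toDual_symm_apply]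
  exact (map_zero f ▸ hfa).trans (hf u (subset_convexHull ℝ s hu))

def unitOuterNormals (C K : Set E) : Set E :=
  {u | ‖u‖ = 1 ∧ ∃ p ∈ K, ∀ y ∈ C, ⟪y, u⟫ ≤ ⟪p, u⟫}

theorem isCompact_unitOuterNormals [ProperSpace E] (C : Set E) {K : Set E} (hK : IsCompact K) :
    IsCompact (unitOuterNormals C K) := by
  have hT : IsCompact ((sphere (0 : E) 1 ×ˢ K) ∩ ⋂ y ∈ C, {z : E × E | ⟪y, z.1⟫ ≤ ⟪z.2, z.1⟫}) :=
    ((isCompact_sphere 0 1).prod hK).inter_right <| isClosed_biInter fun y _ =>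
      isClosed_le (continuous_const.inner continuous_fst) (continuous_snd.inner continuous_fst)
  convert hT.image continuous_fst using 1
  ext u
  simp [unitOuterNormals, and_assoc]

theorem exists_vadd_subset_interior_of_zero_notMem_convexHull [FiniteDimensional ℝ E]
    {K C : Set E} (hK : IsCompact K) (hKC : K ⊆ C) (hCconv : Convex ℝ C) (hC : IsCompact C)
    (hCint : (interior C).Nonempty) (h0 : 0 ∉ convexHull ℝ (unitOuterNormals C K)) :
    ∃ w : E, w +ᵥ K ⊆ interior C := by
  obtain ⟨v, hv⟩ :=
    exists_forall_inner_pos_of_zero_notMem_convexHull (isCompact_unitOuterNormals C hK) h0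
  obtain ⟨t, ht, hpos⟩ := (hK.prod (isCompact_sphere (0 : E) 1)).exists_pos_forall_add_mul_pos
    (f := fun z => supportFunction C z.2 - ⟪z.1, z.2⟫) (g := fun z => ⟪v, z.2⟫)
    (((continuous_supportFunction hC).comp continuous_snd).sub
      (continuous_fst.inner continuous_snd))
    (continuous_const.inner continuous_snd)
    (fun z hz => sub_nonneg.2 (inner_le_supportFunction hC (hKC hz.1) z.2))
    fun z hz hz0 => hv z.2 ⟨mem_sphere_zero_iff_norm.1 hz.2, z.1, hz.1, fun y hy =>
      (inner_le_supportFunction hC hy z.2).trans (sub_eq_zero.1 hz0).le⟩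
  refine ⟨-(t • v), Set.vadd_set_subset_iff.2 fun x hx => ?_⟩
  by_contra hy
  obtain ⟨u, hu, hCu⟩ := exists_norm_eq_one_forall_inner_le_of_notMem_interior hCconv hCint hy
  have hsupp := supportFunction_le (hCint.mono interior_subset) hCu
  have := hpos (x, u) ⟨hx, mem_sphere_zero_iff_norm.2 hu⟩
  simp only [vadd_eq_add, inner_add_left, inner_neg_left, real_inner_smul_left] at hsupp this
  linarith

end InnerProductSpace

theorem circC_le {n : ℕ} {K C : Set (EuclideanSpace ℝ (Fin n))} {ρ : ℝ} (hρ : 0 ≤ ρ)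
    {x : EuclideanSpace ℝ (Fin n)} (h : K ⊆ x +ᵥ ρ • C) : circC K C ≤ ρ :=
  csInf_le ⟨0, fun _ hr => hr.1⟩ ⟨hρ, x, h⟩

theorem optimal_containment_condition_general {n : ℕ}
    (K C : Set (EuclideanSpace ℝ (Fin n)))
    (hKcpt : IsCompact K)
    (hCconv : Convex ℝ C) (hCcpt : IsCompact C) (hCint : (interior C).Nonempty)
    (hKC : K ⊆ C) (hcirc : circC K C = 1) :
    ∃ (j : ℕ), 2 ≤ j ∧ j ≤ n + 1 ∧
      ∃ (p u : Fin j → EuclideanSpace ℝ (Fin n)) (lam : Fin j → ℝ),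
        (∀ i, p i ∈ K ∩ frontier C) ∧
        (∀ i, u i ≠ 0) ∧
        (∀ i, ∀ x ∈ C, (inner ℝ x (u i) : ℝ) ≤ inner ℝ (p i) (u i)) ∧
        (∀ i, 0 < lam i) ∧
        ∑ i, lam i • u i = 0 := by
  have h0 : (0 : EuclideanSpace ℝ (Fin n)) ∈ convexHull ℝ (unitOuterNormals C K) := by
    by_contra h0
    obtain ⟨w, hw⟩ :=
      exists_vadd_subset_interior_of_zero_notMem_convexHull hKcpt hKC hCconv hCcpt hCint h0
    obtain ⟨ρ, hρ0, hρ1, hρ⟩ := (hKcpt.vadd w).exists_subset_smul_of_subset_interior hw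
    have := circC_le hρ0.le (Set.subset_vadd_set_iff.2 ((neg_neg w).symm ▸ hρ))
    linarith
  obtain ⟨j, hj, u, lam, hu, hlam, hlam1, hsum⟩ := exists_fin_pos_sum_smul_eq_of_mem_convexHull h0
  rw [finrank_euclideanSpace_fin] at hj
  have hu0 : ∀ i, u i ≠ 0 := fun i => norm_ne_zero_iff.1 ((hu i).1 ▸ one_ne_zero)
  choose p hpK hp using fun i => (hu i).2
  refine ⟨j, two_le_of_sum_smul_eq_notMem hu hlam1 hsum fun h => by simpa using h.1, hj, p, u,
    lam, fun i => ⟨hpK i, mem_frontier_of_forall_inner_le (hKC (hpK i)) (hu0 i) (hp i)⟩, hu0, hp,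
    hlam, hsum⟩

theorem optimal_containment_condition {n : ℕ}
    (K C : Set (EuclideanSpace ℝ (Fin n)))
    (hKconv : Convex ℝ K) (hKcpt : IsCompact K) (hKne : K.Nonempty)
    (hCconv : Convex ℝ C) (hCcpt : IsCompact C) (hCint : (interior C).Nonempty)
    (hKC : K ⊆ C) (hcirc : circC K C = 1) :
    ∃ (j : ℕ), 2 ≤ j ∧ j ≤ n + 1 ∧
      ∃ (p u : Fin j → EuclideanSpace ℝ (Fin n)) (lam : Fin j → ℝ),
        (∀ i, p i ∈ K ∩ frontier C) ∧
        (∀ i, u i ≠ 0) ∧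
        (∀ i, ∀ x ∈ C, (inner ℝ x (u i) : ℝ) ≤ inner ℝ (p i) (u i)) ∧
        (∀ i, 0 < lam i) ∧
        ∑ i, lam i • u i = 0 :=
  optimal_containment_condition_general K C hKcpt hCconv hCcpt hCint hKC hcirc
end

section
/- The planar convex bodies K = conv{(±1,0), (0, ±(√2−1))} and L = conv{(0,±1), (±(√2−1), 0)} satisfy R(K) = R(L) = 1 and R(K + L) = √2, where R denotes the Euclidean circumradius and K + L the Minkowski sum; yet K and L are not contained in mutually orthogonal linear subspaces. -/
open Metric Pointwise

/-!
`K` and `L` are the rhombi with half-diagonals `a = 1` and `b = √2 - 1` (in the two orders); each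
lies in the disc of radius `max a b = 1` and has its long diagonal as a diameter. `K + L` is the
octagon with vertices `(±a, ±a)`, `(±(a + b), 0)`, `(0, ±(a + b))`, and `b` is chosen so that
`a + b = √2 a`: the octagon lies in the disc of radius `√2 a` with `±(a, a)` antipodal on its
boundary. Orthogonality fails already for the vertices `(0, √2 - 1)` of `K` and `(0, 1)` of `L`.
-/

section circR

variable {n : ℕ} {K : Set (EuclideanSpace ℝ (Fin n))}

lemma circR_le_of_subset_closedBall {c : EuclideanSpace ℝ (Fin n)} {ρ : ℝ} (hρ : 0 ≤ ρ)
    (hK : K ⊆ closedBall c ρ) : circR K ≤ ρ :=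
  csInf_le ⟨0, fun _ h => h.1⟩ ⟨hρ, c, hK⟩

lemma dist_le_two_mul_circR {c : EuclideanSpace ℝ (Fin n)} {ρ : ℝ} (hρ : 0 ≤ ρ)
    (hK : K ⊆ closedBall c ρ) {p q : EuclideanSpace ℝ (Fin n)} (hp : p ∈ K) (hq : q ∈ K) :
    dist p q ≤ 2 * circR K := by
  suffices dist p q / 2 ≤ circR K by linarith
  refine le_csInf ⟨ρ, hρ, c, hK⟩ ?_
  rintro r ⟨-, x, hx⟩
  have := dist_triangle_right p q x
  linarith [mem_closedBall.mp (hx hp), mem_closedBall.mp (hx hq)]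

lemma circR_eq_of_subset_closedBall_of_dist_eq {c : EuclideanSpace ℝ (Fin n)} {ρ : ℝ}
    (hρ : 0 ≤ ρ) (hK : K ⊆ closedBall c ρ) {p q : EuclideanSpace ℝ (Fin n)} (hp : p ∈ K)
    (hq : q ∈ K) (hpq : dist p q = 2 * ρ) : circR K = ρ :=
  le_antisymm (circR_le_of_subset_closedBall hρ hK)
    (by linarith [dist_le_two_mul_circR hρ hK hp hq])

end circR

section ConvexHull

variable {E : Type*} [SeminormedAddCommGroup E] [NormedSpace ℝ E]

lemma convexHull_subset_closedBall_zero {s : Set E} {r : ℝ} (h : ∀ p ∈ s, ‖p‖ ≤ r) :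
    convexHull ℝ s ⊆ closedBall 0 r :=
  convexHull_min (fun p hp => mem_closedBall_zero_iff.mpr (h p hp)) (convex_closedBall 0 r)

lemma convexHull_add_convexHull_subset_closedBall_zero {s t : Set E} {r : ℝ}
    (h : ∀ p ∈ s, ∀ q ∈ t, ‖p + q‖ ≤ r) :
    convexHull ℝ s + convexHull ℝ t ⊆ closedBall 0 r := by
  rw [← convexHull_add]
  refine convexHull_subset_closedBall_zero ?_
  rintro _ ⟨p, hp, q, hq, rfl⟩
  exact h p hp q hq

end ConvexHull

section Plane

lemma EuclideanSpace.vec2_add (u v u' v' : ℝ) :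
    (!₂[u, v] + !₂[u', v'] : EuclideanSpace ℝ (Fin 2)) = !₂[u + u', v + v'] := by
  ext i
  fin_cases i <;> rfl

lemma EuclideanSpace.dist_vec2 (u v u' v' : ℝ) :
    dist (!₂[u, v] : EuclideanSpace ℝ (Fin 2)) !₂[u', v'] =
      Real.sqrt ((u - u') ^ 2 + (v - v') ^ 2) := by
  simp [EuclideanSpace.dist_eq, Fin.sum_univ_two, Real.dist_eq]

lemma EuclideanSpace.norm_vec2_le {u v r : ℝ} (hr : 0 ≤ r) (h : u ^ 2 + v ^ 2 ≤ r ^ 2) :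
    ‖(!₂[u, v] : EuclideanSpace ℝ (Fin 2))‖ ≤ r := by
  simpa [EuclideanSpace.norm_eq, Fin.sum_univ_two] using
    Real.sqrt_le_sqrt h |>.trans_eq (Real.sqrt_sq hr)

lemma EuclideanSpace.inner_vec2 (u v u' v' : ℝ) :
    inner ℝ (!₂[u, v] : EuclideanSpace ℝ (Fin 2)) !₂[u', v'] = u * u' + v * v' := by
  simp [PiLp.inner_apply, Fin.sum_univ_two, mul_comm]

end Plane

section Rhombus

open EuclideanSpace

def rhombus (a b : ℝ) : Set (EuclideanSpace ℝ (Fin 2)) :=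
  convexHull ℝ {!₂[a, 0], !₂[-a, 0], !₂[0, b], !₂[0, -b]}

variable {a b : ℝ}

lemma rhombus_subset_closedBall (ha : 0 ≤ a) (hb : 0 ≤ b) :
    rhombus a b ⊆ closedBall 0 (max a b) := by
  have hma := le_max_left a b
  have hmb := le_max_right a b
  refine convexHull_subset_closedBall_zero ?_
  simp only [Set.mem_insert_iff, Set.mem_singleton_iff, forall_eq_or_imp, forall_eq]
  refine ⟨?_, ?_, ?_, ?_⟩ <;> exact norm_vec2_le (ha.trans hma) (by nlinarith)

lemma circR_rhombus (ha : 0 ≤ a) (hb : 0 ≤ b) : circR (rhombus a b) = max a b := by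
  have hK := rhombus_subset_closedBall ha hb
  rcases le_total b a with hba | hab
  · rw [max_eq_left hba] at hK ⊢
    refine circR_eq_of_subset_closedBall_of_dist_eq ha hK (p := !₂[a, 0]) (q := !₂[-a, 0])
      (subset_convexHull ℝ _ (by simp)) (subset_convexHull ℝ _ (by simp)) ?_
    rw [dist_vec2, Real.sqrt_eq_iff_eq_sq (by positivity) (by linarith)]
    ring
  · rw [max_eq_right hab] at hK ⊢
    refine circR_eq_of_subset_closedBall_of_dist_eq hb hK (p := !₂[0, b]) (q := !₂[0, -b])
      (subset_convexHull ℝ _ (by simp)) (subset_convexHull ℝ _ (by simp)) ?_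
    rw [dist_vec2, Real.sqrt_eq_iff_eq_sq (by positivity) (by linarith)]
    ring

lemma rhombus_add_rhombus_subset_closedBall (hb : 0 ≤ b) (hba : b ≤ a)
    (hsum : a + b ≤ Real.sqrt 2 * a) :
    rhombus a b + rhombus b a ⊆ closedBall 0 (Real.sqrt 2 * a) := by
  have hs : Real.sqrt 2 ^ 2 = 2 := Real.sq_sqrt (by norm_num)
  have hr : 0 ≤ Real.sqrt 2 * a := mul_nonneg (Real.sqrt_nonneg 2) (hb.trans hba)
  have hsum2 : (a + b) ^ 2 ≤ (Real.sqrt 2 * a) ^ 2 := by gcongr; linarith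
  refine convexHull_add_convexHull_subset_closedBall_zero ?_
  simp only [Set.mem_insert_iff, Set.mem_singleton_iff, forall_eq_or_imp, forall_eq, vec2_add]
  refine ⟨⟨?_, ?_, ?_, ?_⟩, ⟨?_, ?_, ?_, ?_⟩, ⟨?_, ?_, ?_, ?_⟩, ⟨?_, ?_, ?_, ?_⟩⟩ <;>
    exact norm_vec2_le hr (by nlinarith)

lemma circR_rhombus_add_rhombus (hb : 0 ≤ b) (hba : b ≤ a) (hsum : a + b ≤ Real.sqrt 2 * a) :
    circR (rhombus a b + rhombus b a) = Real.sqrt 2 * a := by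
  refine circR_eq_of_subset_closedBall_of_dist_eq (mul_nonneg (Real.sqrt_nonneg 2) (hb.trans hba))
    (rhombus_add_rhombus_subset_closedBall hb hba hsum)
    (p := !₂[a, 0] + !₂[0, a]) (q := !₂[-a, 0] + !₂[0, -a])
    (Set.add_mem_add (subset_convexHull ℝ _ (by simp)) (subset_convexHull ℝ _ (by simp)))
    (Set.add_mem_add (subset_convexHull ℝ _ (by simp)) (subset_convexHull ℝ _ (by simp))) ?_
  have hs : Real.sqrt 2 ^ 2 = 2 := Real.sq_sqrt (by norm_num)
  rw [vec2_add, vec2_add, dist_vec2,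
    Real.sqrt_eq_iff_eq_sq (by positivity) (by linarith [hb.trans hba, Real.sqrt_nonneg 2])]
  linear_combination (-4 * a ^ 2) * hs

end Rhombus

open EuclideanSpace in
theorem equality_not_only_if_example :
    let K : Set (EuclideanSpace ℝ (Fin 2)) :=
      convexHull ℝ {!₂[1, 0], !₂[-1, 0], !₂[0, Real.sqrt 2 - 1], !₂[0, -(Real.sqrt 2 - 1)]}
    let L : Set (EuclideanSpace ℝ (Fin 2)) :=
      convexHull ℝ {!₂[0, 1], !₂[0, -1], !₂[Real.sqrt 2 - 1, 0], !₂[-(Real.sqrt 2 - 1), 0]}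
    circR K = 1 ∧ circR L = 1 ∧ circR (K + L) = Real.sqrt 2 ∧
      ¬ ∃ (V W : Submodule ℝ (EuclideanSpace ℝ (Fin 2))),
        (∀ x ∈ V, ∀ y ∈ W, (inner ℝ x y : ℝ) = 0) ∧
          K ⊆ (V : Set (EuclideanSpace ℝ (Fin 2))) ∧
          L ⊆ (W : Set (EuclideanSpace ℝ (Fin 2))) := by
  intro K L
  have hs : Real.sqrt 2 ^ 2 = 2 := Real.sq_sqrt (by norm_num)
  have hs1 : 1 < Real.sqrt 2 := by nlinarith [Real.sqrt_nonneg 2]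
  have hs2 : Real.sqrt 2 < 2 := by nlinarith [Real.sqrt_nonneg 2]
  have hK : K = rhombus 1 (Real.sqrt 2 - 1) := rfl
  have hL : L = rhombus (Real.sqrt 2 - 1) 1 := by
    simp only [L, rhombus]
    congr 1
    ext
    simp only [Set.mem_insert_iff, Set.mem_singleton_iff]
    tauto
  refine ⟨?_, ?_, ?_, ?_⟩
  · rw [hK, circR_rhombus zero_le_one (by linarith), max_eq_left (by linarith)]
  · rw [hL, circR_rhombus (by linarith) zero_le_one, max_eq_right (by linarith)]
  · rw [hK, hL, circR_rhombus_add_rhombus (by linarith) (by linarith) (by linarith), mul_one]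
  · rintro ⟨V, W, horth, hKV, hLW⟩
    have hx : !₂[0, Real.sqrt 2 - 1] ∈ V := hKV (subset_convexHull ℝ _ (by simp))
    have hy : !₂[0, 1] ∈ W := hLW (subset_convexHull ℝ _ (by simp))
    have h := horth _ hx _ hy
    rw [inner_vec2] at h
    linarith
end
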